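/- arXiv:math/0701363 — 2 statements merged into one kernel-verified Lean document; each statement's English description precedes it below -/
import Mathlib

section
/- Let 0 < p₀ < ln 2, ρ = ρ_st the solution of p₀ = ρ/(2 - e^ρ), and Qⁿ_st = (2(1-e^{-ρ}))ⁿ·ρe^{-ρ}/p₀. Then the sequence (Qⁿ_st) is the unique probability distribution (Qⁿ)_{n≥0} on ℕ with all Qⁿ ≥ 0 and ∑ Qⁿ = 1 satisfying the stationary equations: for all n ≥ 1, 2^{1-n}·p₀·Q^{n-1}·(1 - e^{-ρ̄}) = 2^{-n}·p₀·Qⁿ, and ρ̄·e^{-ρ̄} = p₀·Q⁰, where ρ̄ = ∑_{i=0}^∞ 2^{-i}·p₀·Q^i. -/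
open Real

/-- The stationary equations of the mean-field ODE system for exponential back-off. -/
def StationaryEqs (p₀ : ℝ) (Q : ℕ → ℝ) : Prop :=
  (∀ n : ℕ, 1 ≤ n →
      (2:ℝ)^((1:ℤ) - n) * p₀ * Q (n-1) * (1 - Real.exp (-(∑' i : ℕ, (2:ℝ)^(-(i:ℤ)) * p₀ * Q i)))
        = (2:ℝ)^(-(n:ℤ)) * p₀ * Q n) ∧
  (∑' i : ℕ, (2:ℝ)^(-(i:ℤ)) * p₀ * Q i) *
      Real.exp (-(∑' i : ℕ, (2:ℝ)^(-(i:ℤ)) * p₀ * Q i)) = p₀ * Q 0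

/-!
Stage by stage, the balance equations say `Qⁿ⁺¹ = r Qⁿ` with `r = 2(1 - e^{-ρ̄})`, so `Q` is
geometric, and a geometric sequence sums to `1` only if `|r| < 1` and `Q⁰ = 1 - r = 2e^{-ρ̄} - 1`.
The remaining equation `ρ̄ e^{-ρ̄} = p₀ Q⁰` then becomes the fixed-point equation
`ρ̄ = p₀ (2 - e^{ρ̄})`, whose solution is unique because `x ↦ x + p₀ eˣ` is strictly increasing.
-/

/-- `ρ̄` of the stationary equations: a station in back-off stage `i` attempts at rate `2⁻ⁱ p₀`. -/
noncomputable def attemptRate (p₀ : ℝ) (Q : ℕ → ℝ) : ℝ :=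
  ∑' i : ℕ, (2:ℝ)^(-(i:ℤ)) * p₀ * Q i

theorem balance_iff_recurrence {p₀ : ℝ} (hp₀ : p₀ ≠ 0) (c : ℝ) (Q : ℕ → ℝ) :
    (∀ n : ℕ, 1 ≤ n → (2:ℝ)^((1:ℤ) - n) * p₀ * Q (n-1) * c = (2:ℝ)^(-(n:ℤ)) * p₀ * Q n) ↔
      ∀ n, Q (n+1) = 2 * c * Q n := by
  have hstep : ∀ m : ℕ,
      (2:ℝ)^((1:ℤ) - (m+1 : ℕ)) * p₀ * Q m * c = (2:ℝ)^(-((m+1 : ℕ):ℤ)) * p₀ * Q (m+1) ↔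
        Q (m+1) = 2 * c * Q m := by
    intro m
    have h₁ : (1:ℤ) - (m+1 : ℕ) = -(m:ℤ) := by push_cast; ring
    have h₂ : -((m+1 : ℕ):ℤ) = -(m:ℤ) - 1 := by push_cast; ring
    have hne : (2:ℝ)^(-(m:ℤ)) * p₀ / 2 ≠ 0 := by positivity
    rw [h₁, h₂, zpow_sub_one₀ two_ne_zero, ← mul_right_inj' hne (b := Q (m+1))]
    constructor <;> intro h <;> linear_combination -h
  constructor
  · intro h m
    simpa using (hstep m).1 (h (m+1) (by omega))
  · intro h n hn
    obtain ⟨m, rfl⟩ := Nat.exists_eq_add_of_le' hn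
    simpa using (hstep m).2 (h m)

theorem stationaryEqs_iff {p₀ : ℝ} (hp₀ : p₀ ≠ 0) {Q : ℕ → ℝ} :
    StationaryEqs p₀ Q ↔
      (∀ n, Q (n+1) = 2 * (1 - exp (-attemptRate p₀ Q)) * Q n) ∧
        attemptRate p₀ Q * exp (-attemptRate p₀ Q) = p₀ * Q 0 :=
  and_congr_left' (balance_iff_recurrence hp₀ _ Q)

theorem eq_pow_mul_of_succ_eq_mul {Q : ℕ → ℝ} {r : ℝ} (h : ∀ n, Q (n+1) = r * Q n) :
    Q = fun n => r^n * Q 0 := by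
  funext n
  induction n with
  | zero => simp
  | succ n ih => rw [h, ih, pow_succ]; ring

theorem hasSum_pow_mul_eq_one_iff {r a : ℝ} :
    HasSum (fun n => r^n * a) 1 ↔ |r| < 1 ∧ a = 1 - r := by
  constructor
  · intro h
    have ha : a ≠ 0 := by
      rintro rfl
      exact one_ne_zero (h.unique (by simp))
    have hr : |r| < 1 := by
      simpa using summable_geometric_iff_norm_lt_one.1 ((summable_mul_right_iff ha).1 h.summable)
    have hr₁ : 1 - r ≠ 0 := by linarith [le_abs_self r]
    have hsum := h.unique ((hasSum_geometric_of_abs_lt_one hr).mul_right a)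
    exact ⟨hr, ((inv_mul_eq_one₀ hr₁).1 hsum.symm).symm⟩
  · rintro ⟨hr, rfl⟩
    have hr₁ : 1 - r ≠ 0 := by linarith [le_abs_self r]
    simpa [inv_mul_cancel₀ hr₁] using (hasSum_geometric_of_abs_lt_one hr).mul_right (1 - r)

theorem attemptRate_geometric (p₀ a : ℝ) {r : ℝ} (hr : |r| < 2) :
    attemptRate p₀ (fun n => r^n * a) = p₀ * a / (1 - r / 2) := by
  have hterm : ∀ i : ℕ, (2:ℝ)^(-(i:ℤ)) * p₀ * (r^i * a) = (r / 2)^i * (p₀ * a) := by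
    intro i
    rw [zpow_neg, zpow_natCast, div_pow]
    ring
  have hr2 : |r / 2| < 1 := by rw [abs_div, abs_two]; linarith
  simp only [attemptRate, hterm]
  rw [((hasSum_geometric_of_abs_lt_one hr2).mul_right _).tsum_eq]
  ring

theorem mul_exp_neg_eq_iff {x p : ℝ} :
    x * exp (-x) = p * (2 * exp (-x) - 1) ↔ x = p * (2 - exp x) := by
  have hx : exp x * exp (-x) = 1 := by rw [← exp_add, add_neg_cancel, exp_zero]
  constructor <;> intro h
  · linear_combination exp x * h - (x - 2 * p) * hx
  · linear_combination exp (-x) * h - p * hx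

theorem strictMono_add_mul_exp {p : ℝ} (hp : 0 ≤ p) : StrictMono fun x => x + p * exp x :=
  strictMono_id.add_monotone (exp_monotone.const_mul hp)

theorem two_mul_one_sub_exp_neg_mem_Ico {ρ : ℝ} (hρ : ρ ∈ Set.Ico 0 (log 2)) :
    2 * (1 - exp (-ρ)) ∈ Set.Ico 0 1 := by
  have h₁ : exp (-ρ) ≤ 1 := exp_le_one_iff.2 (by linarith [hρ.1])
  have h₂ : exp (-log 2) < exp (-ρ) := exp_lt_exp.2 (by linarith [hρ.2])
  rw [exp_neg, exp_log two_pos] at h₂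
  constructor <;> linarith

theorem hasSum_one_and_stationaryEqs_iff {p₀ : ℝ} (hp₀ : p₀ ≠ 0) {Q : ℕ → ℝ} :
    HasSum Q 1 ∧ StationaryEqs p₀ Q ↔
      ∃ σ, σ = p₀ * (2 - exp σ) ∧ |2 * (1 - exp (-σ))| < 1 ∧
        Q = fun n => (2 * (1 - exp (-σ)))^n * (2 * exp (-σ) - 1) := by
  constructor
  · rintro ⟨hsum, hQ⟩
    obtain ⟨hrec, hbalance⟩ := (stationaryEqs_iff hp₀).1 hQ
    have hgeom := eq_pow_mul_of_succ_eq_mul hrec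
    obtain ⟨hr, hzero⟩ := hasSum_pow_mul_eq_one_iff.1 (hgeom ▸ hsum)
    have hzero' : Q 0 = 2 * exp (-attemptRate p₀ Q) - 1 := by rw [hzero]; ring
    refine ⟨attemptRate p₀ Q, ?_, hr, hzero' ▸ hgeom⟩
    rwa [← mul_exp_neg_eq_iff, ← hzero']
  · rintro ⟨σ, hσ, hr, rfl⟩
    have hrate : attemptRate p₀ (fun n => (2 * (1 - exp (-σ)))^n * (2 * exp (-σ) - 1)) = σ := by
      have h_half : 1 - 2 * (1 - exp (-σ)) / 2 = exp (-σ) := by ring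
      rw [attemptRate_geometric _ _ (by linarith), h_half, ← mul_exp_neg_eq_iff.2 hσ,
        mul_div_cancel_right₀ _ (exp_pos _).ne']
    refine ⟨hasSum_pow_mul_eq_one_iff.2 ⟨hr, by ring⟩, (stationaryEqs_iff hp₀).2 ⟨?_, ?_⟩⟩
    · intro n
      rw [hrate]
      ring
    · rw [hrate, mul_exp_neg_eq_iff.2 hσ]
      ring

theorem expBackoff_stationary_unique_general
    (p₀ ρ : ℝ) (hp₀ : 0 < p₀)
    (hρ : ρ ∈ Set.Ioo (0:ℝ) (Real.log 2))
    (hfix : p₀ = ρ / (2 - Real.exp ρ))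
    (Qst : ℕ → ℝ)
    (hQst : ∀ n, Qst n = (2 * (1 - Real.exp (-ρ)))^n * (ρ * Real.exp (-ρ) / p₀)) :
    ((∀ n, 0 ≤ Qst n) ∧ HasSum Qst 1 ∧ StationaryEqs p₀ Qst) ∧
    ∀ Q : ℕ → ℝ, (∀ n, 0 ≤ Q n) → HasSum Q 1 → StationaryEqs p₀ Q → Q = Qst := by
  have hρ_fix : ρ = p₀ * (2 - exp ρ) := by
    have h2 : 2 - exp ρ ≠ 0 := fun h => hp₀.ne' (by rw [hfix, h, div_zero])
    rw [hfix, div_mul_cancel₀ _ h2]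
  have hQst_eq : Qst = fun n => (2 * (1 - exp (-ρ)))^n * (2 * exp (-ρ) - 1) := by
    funext n
    rw [hQst, mul_exp_neg_eq_iff.2 hρ_fix, mul_div_cancel_left₀ _ hp₀.ne']
  obtain ⟨hr₀, hr₁⟩ := two_mul_one_sub_exp_neg_mem_Ico (Set.Ioo_subset_Ico_self hρ)
  obtain ⟨hQst_sum, hQst_stationary⟩ := (hasSum_one_and_stationaryEqs_iff hp₀.ne').2
    ⟨ρ, hρ_fix, abs_lt.2 ⟨by linarith, hr₁⟩, hQst_eq⟩
  refine ⟨⟨fun n => ?_, hQst_sum, hQst_stationary⟩, fun Q _ hsum hQ => ?_⟩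
  · rw [hQst_eq]
    exact mul_nonneg (pow_nonneg hr₀ n) (by linarith)
  · obtain ⟨σ, hσ, -, rfl⟩ := (hasSum_one_and_stationaryEqs_iff hp₀.ne').1 ⟨hsum, hQ⟩
    obtain rfl : σ = ρ := (strictMono_add_mul_exp hp₀.le).injective (by linarith)
    exact hQst_eq.symm

theorem expBackoff_stationary_unique
    (p₀ ρ : ℝ) (hp₀ : 0 < p₀) (hp₀' : p₀ < Real.log 2)
    (hρ : ρ ∈ Set.Ioo (0:ℝ) (Real.log 2))
    (hfix : p₀ = ρ / (2 - Real.exp ρ))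
    (Qst : ℕ → ℝ)
    (hQst : ∀ n, Qst n = (2 * (1 - Real.exp (-ρ)))^n * (ρ * Real.exp (-ρ) / p₀)) :
    ((∀ n, 0 ≤ Qst n) ∧ HasSum Qst 1 ∧ StationaryEqs p₀ Qst) ∧
    ∀ Q : ℕ → ℝ, (∀ n, 0 ≤ Q n) → HasSum Q 1 → StationaryEqs p₀ Q → Q = Qst :=
  expBackoff_stationary_unique_general p₀ ρ hp₀ hρ hfix Qst hQst
end

section
/- Let (Mₖ)ₖ and (M'ₖ)ₖ be two square-integrable martingales with respect to the same filtration (𝓕ₖ), with M₀ = M'₀ = 0, whose increments satisfy |E[ΔMₖ·ΔM'ₖ | 𝓕ₖ]| ≤ 8C²·max(ρ_N/N, 1/N²) almost surely, where ρ_N ≥ 0. Then |E[M_{⌊Nt⌋}·M'_{⌊Nt⌋}]| ≤ 8C²·(t+1/N)·max(ρ_N, 1/N); in particular if ρ_N → 0, then E[M_{⌊Nt⌋}·M'_{⌊Nt⌋}] → 0 as N → ∞. -/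
open MeasureTheory Real Filter

private lemma integrable_mul_of_memL2 {Ω : Type*} {m0 : MeasurableSpace Ω} {μ : Measure Ω}
    {f g : Ω → ℝ} (hf : MemLp f 2 μ) (hg : MemLp g 2 μ) :
    Integrable (fun ω => f ω * g ω) μ := by
  refine Integrable.mono' ((hf.integrable_sq.add hg.integrable_sq).const_mul (1/2 : ℝ))
    (hf.aestronglyMeasurable.mul hg.aestronglyMeasurable) ?_
  filter_upwards with ω
  have h : |f ω| * |g ω| ≤ 1/2 * (f ω ^ 2 + g ω ^ 2) := by
    nlinarith [abs_nonneg (f ω), abs_nonneg (g ω), sq_abs (f ω), sq_abs (g ω),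
      sq_nonneg (|f ω| - |g ω|)]
  simpa [Real.norm_eq_abs, abs_mul] using h

private lemma cross_zero {Ω : Type*} {m0 : MeasurableSpace Ω} {μ : Measure Ω}
    [IsProbabilityMeasure μ] (𝓕 : Filtration ℕ m0) (A B : ℕ → Ω → ℝ)
    (hA : Martingale A 𝓕 μ) (hB : Martingale B 𝓕 μ)
    (hL2A : ∀ k, MemLp (A k) 2 μ) (hL2B : ∀ k, MemLp (B k) 2 μ) (k : ℕ) :
    ∫ ω, A k ω * (B (k+1) ω - B k ω) ∂μ = 0 := by
  have hfmeas : StronglyMeasurable[𝓕 k] (A k) := hA.stronglyAdapted k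
  have hg : Integrable (fun ω => B (k+1) ω - B k ω) μ :=
    ((hL2B (k+1)).integrable (by norm_num)).sub ((hL2B k).integrable (by norm_num))
  have hfg : Integrable (fun ω => A k ω * (B (k+1) ω - B k ω)) μ := by
    have h := (integrable_mul_of_memL2 (hL2A k) (hL2B (k+1))).sub
      (integrable_mul_of_memL2 (hL2A k) (hL2B k))
    simpa [mul_sub, Pi.sub_def] using h
  have h1 : μ[fun ω => A k ω * (B (k+1) ω - B k ω) | 𝓕 k]
      =ᵐ[μ] (A k) * μ[fun ω => B (k+1) ω - B k ω | 𝓕 k] :=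
    condExp_mul_of_stronglyMeasurable_left hfmeas hfg hg
  have h2 : μ[fun ω => B (k+1) ω - B k ω | 𝓕 k] =ᵐ[μ] 0 := by
    have hs : μ[fun ω => B (k+1) ω - B k ω | 𝓕 k]
        =ᵐ[μ] μ[B (k+1) | 𝓕 k] - μ[B k | 𝓕 k] :=
      condExp_sub ((hL2B (k+1)).integrable (by norm_num)) ((hL2B k).integrable (by norm_num)) _
    have h3 : μ[B (k+1) | 𝓕 k] =ᵐ[μ] B k := hB.condExp_ae_eq (Nat.le_succ k)
    have h4 : μ[B k | 𝓕 k] =ᵐ[μ] B k := hB.condExp_ae_eq le_rfl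
    filter_upwards [hs, h3, h4] with ω hω h3ω h4ω
    simp [hω, h3ω, h4ω]
  have hz : μ[fun ω => A k ω * (B (k+1) ω - B k ω) | 𝓕 k] =ᵐ[μ] 0 := by
    filter_upwards [h1, h2] with ω hω h2ω
    simp only [Pi.mul_apply] at hω
    simp [hω, h2ω]
  calc ∫ ω, A k ω * (B (k+1) ω - B k ω) ∂μ
      = ∫ ω, (μ[fun ω => A k ω * (B (k+1) ω - B k ω) | 𝓕 k]) ω ∂μ :=
        (integral_condExp (𝓕.le k)).symm
    _ = 0 := by rw [integral_congr_ae hz]; simp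

theorem martingale_cross_bracket_bound
    {Ω : Type*} {m0 : MeasurableSpace Ω} {μ : Measure Ω} [IsProbabilityMeasure μ]
    (𝓕 : Filtration ℕ m0) (M M' : ℕ → Ω → ℝ)
    (hM : Martingale M 𝓕 μ) (hM' : Martingale M' 𝓕 μ)
    (hM0 : M 0 = 0) (hM'0 : M' 0 = 0)
    (hL2 : ∀ k, MemLp (M k) 2 μ) (hL2' : ∀ k, MemLp (M' k) 2 μ)
    (C : ℝ) (hC : 0 < C) (N : ℕ) (hN : 1 ≤ N) (ρ : ℝ) (hρ : 0 ≤ ρ)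
    (hbr : ∀ k, ∀ᵐ ω ∂μ,
        |(μ[fun ω => (M (k+1) ω - M k ω) * (M' (k+1) ω - M' k ω) | 𝓕 k]) ω|
          ≤ 8 * C^2 * max (ρ / N) (1 / (N:ℝ)^2)) :
    ∀ t : ℝ, 0 ≤ t →
      |∫ ω, M (Nat.floor ((N:ℝ) * t)) ω * M' (Nat.floor ((N:ℝ) * t)) ω ∂μ|
        ≤ 8 * C^2 * (t + 1 / N) * max ρ (1 / N) := by
  intro t ht
  have hNpos : (0:ℝ) < N := by exact_mod_cast hN
  have hInt : ∀ j k, Integrable (fun ω => M j ω * M' k ω) μ := fun j k =>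
    integrable_mul_of_memL2 (hL2 j) (hL2' k)
  set b : ℝ := 8 * C^2 * max (ρ / N) (1 / (N:ℝ)^2) with hb
  have hbnn : 0 ≤ b := by positivity
  -- decomposition into increments
  have key : ∀ m, (∫ ω, M m ω * M' m ω ∂μ)
      = ∑ k ∈ Finset.range m,
          ∫ ω, (M (k+1) ω - M k ω) * (M' (k+1) ω - M' k ω) ∂μ := by
    intro m
    induction m with
    | zero => simp [hM0]
    | succ m ih =>
      have iA : Integrable (fun ω => M m ω * M' m ω) μ := hInt m m
      have iB : Integrable (fun ω => (M (m+1) ω - M m ω) * (M' (m+1) ω - M' m ω)) μ := by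
        have h := (((hInt (m+1) (m+1)).sub (hInt (m+1) m)).sub (hInt m (m+1))).add (hInt m m)
        have he : (fun ω => (M (m+1) ω - M m ω) * (M' (m+1) ω - M' m ω))
            = fun ω => M (m+1) ω * M' (m+1) ω - M (m+1) ω * M' m ω
                - M m ω * M' (m+1) ω + M m ω * M' m ω := by
          funext ω; ring
        rw [he]; exact h
      have iC : Integrable (fun ω => M m ω * (M' (m+1) ω - M' m ω)) μ := by
        have h := (hInt m (m+1)).sub (hInt m m)
        simpa [mul_sub, Pi.sub_def] using h
      have iD : Integrable (fun ω => (M (m+1) ω - M m ω) * M' m ω) μ := by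
        have h := (hInt (m+1) m).sub (hInt m m)
        simpa [sub_mul, Pi.sub_def] using h
      have expand : (∫ ω, M (m+1) ω * M' (m+1) ω ∂μ)
          = ∫ ω, (M m ω * M' m ω + (M (m+1) ω - M m ω) * (M' (m+1) ω - M' m ω)
              + M m ω * (M' (m+1) ω - M' m ω) + (M (m+1) ω - M m ω) * M' m ω) ∂μ := by
        congr 1; funext ω; ring
      have hc1 : ∫ ω, M m ω * (M' (m+1) ω - M' m ω) ∂μ = 0 :=
        cross_zero 𝓕 M M' hM hM' hL2 hL2' m
      have hc2 : ∫ ω, (M (m+1) ω - M m ω) * M' m ω ∂μ = 0 := by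
        have h := cross_zero 𝓕 M' M hM' hM hL2' hL2 m
        have he : (∫ ω, (M (m+1) ω - M m ω) * M' m ω ∂μ)
            = ∫ ω, M' m ω * (M (m+1) ω - M m ω) ∂μ := by
          congr 1; funext ω; ring
        rw [he]; exact h
      have e1 := integral_add ((iA.add iB).add iC) iD
      have e2 := integral_add (iA.add iB) iC
      have e3 := integral_add iA iB
      simp only [Pi.add_apply] at e1 e2 e3
      rw [Finset.sum_range_succ, ← ih, expand, e1, e2, e3, hc1, hc2]
      ring
  -- each increment term is bounded by b
  have term_bound : ∀ k,
      |∫ ω, (M (k+1) ω - M k ω) * (M' (k+1) ω - M' k ω) ∂μ| ≤ b := by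
    intro k
    have hfg : Integrable (fun ω => (M (k+1) ω - M k ω) * (M' (k+1) ω - M' k ω)) μ := by
      have h := (((hInt (k+1) (k+1)).sub (hInt (k+1) k)).sub (hInt k (k+1))).add (hInt k k)
      have he : (fun ω => (M (k+1) ω - M k ω) * (M' (k+1) ω - M' k ω))
          = fun ω => M (k+1) ω * M' (k+1) ω - M (k+1) ω * M' k ω
              - M k ω * M' (k+1) ω + M k ω * M' k ω := by
        funext ω; ring
      rw [he]; exact h
    have h1 : (∫ ω, (M (k+1) ω - M k ω) * (M' (k+1) ω - M' k ω) ∂μ)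
        = ∫ ω, (μ[fun ω => (M (k+1) ω - M k ω) * (M' (k+1) ω - M' k ω) | 𝓕 k]) ω ∂μ :=
      (integral_condExp (𝓕.le k)).symm
    rw [h1]
    calc |∫ ω, (μ[fun ω => (M (k+1) ω - M k ω) * (M' (k+1) ω - M' k ω) | 𝓕 k]) ω ∂μ|
        ≤ ∫ ω, |(μ[fun ω => (M (k+1) ω - M k ω) * (M' (k+1) ω - M' k ω) | 𝓕 k]) ω| ∂μ :=
          by simpa [Real.norm_eq_abs] using
            norm_integral_le_integral_norm
              fun ω => (μ[fun ω => (M (k+1) ω - M k ω) * (M' (k+1) ω - M' k ω) | 𝓕 k]) ω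
      _ ≤ ∫ _ω, b ∂μ := by
          refine integral_mono_ae (integrable_condExp.abs) (integrable_const b) ?_
          exact hbr k
      _ = b := by simp
  -- sum up
  set n := Nat.floor ((N:ℝ) * t) with hnd
  have hsum : |∫ ω, M n ω * M' n ω ∂μ| ≤ (n : ℝ) * b := by
    rw [key n]
    calc |∑ k ∈ Finset.range n,
            ∫ ω, (M (k+1) ω - M k ω) * (M' (k+1) ω - M' k ω) ∂μ|
        ≤ ∑ k ∈ Finset.range n,
            |∫ ω, (M (k+1) ω - M k ω) * (M' (k+1) ω - M' k ω) ∂μ| :=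
          Finset.abs_sum_le_sum_abs _ _
      _ ≤ ∑ _k ∈ Finset.range n, b := Finset.sum_le_sum fun k _ => term_bound k
      _ = (n : ℝ) * b := by simp [mul_comm]
  refine hsum.trans ?_
  -- arithmetic
  have hmax : max (ρ / N) (1 / (N:ℝ)^2) = max ρ (1 / N) / N := by
    have h2 : (1:ℝ) / (N:ℝ)^2 = (1 / N) / N := by rw [div_div, sq]
    rw [h2, max_div_div_right hNpos.le]
  have hfloor : (n:ℝ) ≤ (N:ℝ) * t := Nat.floor_le (by positivity)
  have hdiv : (n:ℝ) / N ≤ t + 1 / N := by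
    have h : (n:ℝ) / N ≤ t := by
      rw [div_le_iff₀ hNpos]; linarith
    have : (0:ℝ) ≤ 1 / N := by positivity
    linarith
  calc (n:ℝ) * b = 8 * C^2 * ((n:ℝ) / N) * max ρ (1 / N) := by
        rw [hb, hmax]; ring
    _ ≤ 8 * C^2 * (t + 1 / N) * max ρ (1 / N) := by
        have hMnn : (0:ℝ) ≤ max ρ (1 / N) := le_max_of_le_left hρ
        have hC2 : (0:ℝ) ≤ 8 * C^2 := by positivity
        have hnn : (0:ℝ) ≤ (n:ℝ) / N := by positivity
        nlinarith [mul_le_mul_of_nonneg_left hdiv hC2]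
end
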